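/- arXiv:1303.6491 — 3 statements merged into one kernel-verified Lean document; each statement's English description precedes it below -/
import Mathlib

section
/- For every constructible special point data R = ((ℓ_1,…,ℓ_d),(u_1,…,u_{d+1})) of level d with q nodes, the d+1 tuples u_1, …, u_{d+1} ∈ {1,2}^d are pairwise distinct, and for every ℓ ∈ {1,…,q} the relation <_ℓ (taken relative to the node labels of R) is a strict total order on the set {u_1,…,u_{d+1}}: it is irreflexive and transitive on this set, and any two distinct elements of it are comparable. -/
/-!
Irreflexivity and transitivity of `<_ℓ` hold for arbitrary tuples. For totality the tuples must
take values in `{1,2}`: if two of them differ at an `ℓ`-labelled coordinate, the last such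
coordinate decides by clause (i); otherwise the first coordinate where they differ has a label
other than `ℓ` and decides by clause (ii). Constructibility gives `{1,2}`-valued tuples, and it
preserves injectivity because each step permutes the old tuples and appends a last coordinate
that separates the first `h` of them from the rest.
-/

/-- The relation `u <_ℓ u'` on `{1,2}^d`, relative to node labels `lab : Fin d → ℕ`. -/
def ltNode {d : ℕ} (lab : Fin d → ℕ) (ℓ : ℕ) (u u' : Fin d → ℕ) : Prop :=
  (∃ k₀ : Fin d, lab k₀ = ℓ ∧ u k₀ = 2 ∧ u' k₀ = 1 ∧
      ∀ k : Fin d, k₀ < k → lab k = ℓ → u k = u' k) ∨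
  ((∀ k : Fin d, lab k = ℓ → u k = u' k) ∧
    ∃ k₀ : Fin d, lab k₀ ≠ ℓ ∧ u k₀ = 1 ∧ u' k₀ = 2 ∧
      ∀ k : Fin d, k < k₀ → u k = u' k)

/-- Constructible special point data of level `d` with `q` nodes. -/
inductive Constructible (q : ℕ) :
    (d : ℕ) → (Fin d → ℕ) → (Fin (d + 1) → Fin d → ℕ) → Prop
  | base (ℓ : ℕ) (h1 : 1 ≤ ℓ) (hq : ℓ ≤ q) :
      Constructible q 1 (fun _ => ℓ) ![![1], ![2]]
  | step {d : ℕ} {lab : Fin d → ℕ} {u : Fin (d + 1) → Fin d → ℕ}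
      (hR : Constructible q d lab u) (ℓ : ℕ) (h1 : 1 ≤ ℓ) (hq : ℓ ≤ q)
      (v : Fin (d + 1) → Fin d → ℕ) (σ : Equiv.Perm (Fin (d + 1)))
      (hv : ∀ j, v j = u (σ j))
      (hsort : ∀ i j : Fin (d + 1), i < j → ltNode lab ℓ (v i) (v j))
      (h : ℕ) (hh1 : 1 ≤ h) (hh2 : h ≤ d + 1) :
      Constructible q (d + 1) (Fin.snoc lab ℓ)
        (fun j : Fin (d + 2) =>
          if hj : (j : ℕ) < h then Fin.snoc (v ⟨(j : ℕ), by omega⟩) 1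
          else Fin.snoc (v ⟨(j : ℕ) - 1, by omega⟩) 2)

/-- `a^ℓ_u(R)`: the number of `k` with `ℓ_k = ℓ` and `u(k) = 2`. -/
def aCount {d : ℕ} (lab : Fin d → ℕ) (ℓ : ℕ) (u : Fin d → ℕ) : ℕ :=
  (Finset.univ.filter (fun k : Fin d => lab k = ℓ ∧ u k = 2)).card

/-- `|a_u(R)|`: the number of `k` with `u(k) = 2`. -/
def aTot {d : ℕ} (u : Fin d → ℕ) : ℕ :=
  (Finset.univ.filter (fun k : Fin d => u k = 2)).card

/-- Lexicographic order on tuples, comparing at the smallest coordinate where they differ. -/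
def lexLt {d : ℕ} (u u' : Fin d → ℕ) : Prop :=
  ∃ k₀ : Fin d, (∀ k : Fin d, k < k₀ → u k = u' k) ∧ u k₀ < u' k₀


section ExtremalDifference

variable {ι α : Type*} [LinearOrder ι]

theorem exists_first_ne [WellFoundedLT ι] {u v : ι → α} (h : u ≠ v) :
    ∃ k₀, u k₀ ≠ v k₀ ∧ ∀ k, k < k₀ → u k = v k := by
  obtain ⟨k, hk⟩ := Function.ne_iff.mp h
  obtain ⟨k₀, hk₀, hmin⟩ := wellFounded_lt.has_min {k | u k ≠ v k} ⟨k, hk⟩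
  exact ⟨k₀, hk₀, fun k hlt => by_contra fun hne => hmin k hne hlt⟩

theorem exists_last_ne_of_exists_ne [WellFoundedGT ι] {p : ι → Prop} {u v : ι → α}
    (h : ∃ k, p k ∧ u k ≠ v k) :
    ∃ k₀, p k₀ ∧ u k₀ ≠ v k₀ ∧ ∀ k, k₀ < k → p k → u k = v k := by
  obtain ⟨k₀, ⟨hp, hne⟩, hmax⟩ := wellFounded_gt.has_min {k | p k ∧ u k ≠ v k} h
  exact ⟨k₀, hp, hne, fun k hlt hpk => by_contra fun hne => hmax k ⟨hpk, hne⟩ hlt⟩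

end ExtremalDifference

section LtNode

variable {d : ℕ} (lab : Fin d → ℕ) (ℓ : ℕ)

theorem ltNode_irrefl (u : Fin d → ℕ) : ¬ ltNode lab ℓ u u := by
  rintro (⟨k₀, -, h2, h1, -⟩ | ⟨-, k₀, -, h1, h2, -⟩) <;> omega

variable {lab ℓ}

theorem ltNode_trans {u v w : Fin d → ℕ} (huv : ltNode lab ℓ u v) (hvw : ltNode lab ℓ v w) :
    ltNode lab ℓ u w := by
  rcases huv with ⟨k₁, hl₁, hu₁, hv₁, ha₁⟩ | ⟨he₁, k₁, hl₁, hu₁, hv₁, ha₁⟩ <;>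
  rcases hvw with ⟨k₂, hl₂, hv₂, hw₂, ha₂⟩ | ⟨he₂, k₂, hl₂, hv₂, hw₂, ha₂⟩
  · rcases lt_trichotomy k₁ k₂ with hlt | rfl | hlt
    · exact Or.inl ⟨k₂, hl₂, (ha₁ k₂ hlt hl₂).trans hv₂, hw₂,
        fun k hk hkl => (ha₁ k (hlt.trans hk) hkl).trans (ha₂ k hk hkl)⟩
    · omega
    · exact Or.inl ⟨k₁, hl₁, hu₁, (ha₂ k₁ hlt hl₁).symm.trans hv₁,
        fun k hk hkl => (ha₁ k hk hkl).trans (ha₂ k (hlt.trans hk) hkl)⟩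
  · exact Or.inl ⟨k₁, hl₁, hu₁, (he₂ k₁ hl₁).symm.trans hv₁,
      fun k hk hkl => (ha₁ k hk hkl).trans (he₂ k hkl)⟩
  · exact Or.inl ⟨k₂, hl₂, (he₁ k₂ hl₂).trans hv₂, hw₂,
      fun k hk hkl => (he₁ k hkl).trans (ha₂ k hk hkl)⟩
  · refine Or.inr ⟨fun k hk => (he₁ k hk).trans (he₂ k hk), ?_⟩
    rcases lt_trichotomy k₁ k₂ with hlt | rfl | hlt
    · exact ⟨k₁, hl₁, hu₁, (ha₂ k₁ hlt).symm.trans hv₁,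
        fun k hk => (ha₁ k hk).trans (ha₂ k (hk.trans hlt))⟩
    · omega
    · exact ⟨k₂, hl₂, (ha₁ k₂ hlt).trans hv₂, hw₂,
        fun k hk => (ha₁ k (hk.trans hlt)).trans (ha₂ k hk)⟩

theorem ltNode_or_ltNode_of_exists_ne_at_label {u v : Fin d → ℕ}
    (hu : ∀ k, u k = 1 ∨ u k = 2) (hv : ∀ k, v k = 1 ∨ v k = 2)
    (h : ∃ k, lab k = ℓ ∧ u k ≠ v k) : ltNode lab ℓ u v ∨ ltNode lab ℓ v u := by
  obtain ⟨k₀, hl, hne, hafter⟩ := exists_last_ne_of_exists_ne h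
  rcases hu k₀ with hu₀ | hu₀ <;> rcases hv k₀ with hv₀ | hv₀
  · omega
  · exact Or.inr (Or.inl ⟨k₀, hl, hv₀, hu₀, fun k hk hkl => (hafter k hk hkl).symm⟩)
  · exact Or.inl (Or.inl ⟨k₀, hl, hu₀, hv₀, hafter⟩)
  · omega

theorem ltNode_or_ltNode_of_eq_at_label {u v : Fin d → ℕ}
    (hu : ∀ k, u k = 1 ∨ u k = 2) (hv : ∀ k, v k = 1 ∨ v k = 2) (huv : u ≠ v)
    (h : ∀ k, lab k = ℓ → u k = v k) : ltNode lab ℓ u v ∨ ltNode lab ℓ v u := by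
  obtain ⟨k₀, hne, hbefore⟩ := exists_first_ne huv
  have hl : lab k₀ ≠ ℓ := fun hl => hne (h k₀ hl)
  rcases hu k₀ with hu₀ | hu₀ <;> rcases hv k₀ with hv₀ | hv₀
  · omega
  · exact Or.inl (Or.inr ⟨h, k₀, hl, hu₀, hv₀, hbefore⟩)
  · exact Or.inr (Or.inr ⟨fun k hk => (h k hk).symm, k₀, hl, hv₀, hu₀,
      fun k hk => (hbefore k hk).symm⟩)
  · omega

theorem ltNode_total {u v : Fin d → ℕ}
    (hu : ∀ k, u k = 1 ∨ u k = 2) (hv : ∀ k, v k = 1 ∨ v k = 2) (huv : u ≠ v) :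
    ltNode lab ℓ u v ∨ ltNode lab ℓ v u := by
  by_cases h : ∃ k, lab k = ℓ ∧ u k ≠ v k
  · exact ltNode_or_ltNode_of_exists_ne_at_label hu hv h
  · push Not at h
    exact ltNode_or_ltNode_of_eq_at_label hu hv huv h

end LtNode

namespace Constructible

variable {q d : ℕ} {lab : Fin d → ℕ} {u : Fin (d + 1) → Fin d → ℕ}

theorem eq_one_or_eq_two (hR : Constructible q d lab u) (j : Fin (d + 1)) (k : Fin d) :
    u j k = 1 ∨ u j k = 2 := by
  induction hR with
  | base => fin_cases j <;> fin_cases k <;> simp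
  | step _ _ _ _ v _ hv _ h _ _ ih =>
    by_cases hj : (j : ℕ) < h <;> simp only [hj, dite_true, dite_false] <;>
      induction k using Fin.lastCases with
      | last => simp
      | cast k => simpa only [Fin.snoc_castSucc, hv] using ih _ _

theorem injective (hR : Constructible q d lab u) : Function.Injective u := by
  induction hR with
  | base => decide
  | step _ _ _ _ v σ hv _ h _ _ ih =>
    have hv_inj : Function.Injective v := by
      rw [funext hv]
      exact ih.comp σ.injective
    intro j j' heq
    by_cases hj : (j : ℕ) < h <;> by_cases hj' : (j' : ℕ) < h <;>
      simp only [hj, hj', dite_true, dite_false, Fin.snoc_inj] at heq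
    · exact Fin.ext (Fin.mk.inj_iff.mp (hv_inj heq.1))
    · omega
    · omega
    · have := Fin.mk.inj_iff.mp (hv_inj heq.1)
      exact Fin.ext (by omega)

end Constructible

theorem constructible_ltNode_strict_total_order_general {q d : ℕ}
    {lab : Fin d → ℕ} {u : Fin (d + 1) → Fin d → ℕ}
    (hR : Constructible q d lab u) (ℓ : ℕ) :
    Function.Injective u ∧
    (∀ j : Fin (d + 1), ¬ ltNode lab ℓ (u j) (u j)) ∧
    (∀ j₁ j₂ j₃ : Fin (d + 1), ltNode lab ℓ (u j₁) (u j₂) →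
      ltNode lab ℓ (u j₂) (u j₃) → ltNode lab ℓ (u j₁) (u j₃)) ∧
    (∀ j₁ j₂ : Fin (d + 1), u j₁ ≠ u j₂ →
      ltNode lab ℓ (u j₁) (u j₂) ∨ ltNode lab ℓ (u j₂) (u j₁)) :=
  ⟨hR.injective, fun j => ltNode_irrefl lab ℓ (u j), fun _ _ _ => ltNode_trans,
    fun j₁ j₂ => ltNode_total (hR.eq_one_or_eq_two j₁) (hR.eq_one_or_eq_two j₂)⟩

/-- For every constructible special point data `R = ((ℓ_1,…,ℓ_d),(u_1,…,u_{d+1}))` of level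
`d` with `q` nodes, the tuples `u_1, …, u_{d+1}` are pairwise distinct, and for every node
label `ℓ ∈ {1,…,q}` the relation `<_ℓ` is a strict total order on `{u_1,…,u_{d+1}}`. -/
theorem constructible_ltNode_strict_total_order {q d : ℕ} (hq : 1 ≤ q) (hd : 1 ≤ d)
    {lab : Fin d → ℕ} {u : Fin (d + 1) → Fin d → ℕ}
    (hR : Constructible q d lab u) (ℓ : ℕ) (hℓ1 : 1 ≤ ℓ) (hℓq : ℓ ≤ q) :
    Function.Injective u ∧
    (∀ j : Fin (d + 1), ¬ ltNode lab ℓ (u j) (u j)) ∧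
    (∀ j₁ j₂ j₃ : Fin (d + 1), ltNode lab ℓ (u j₁) (u j₂) →
      ltNode lab ℓ (u j₂) (u j₃) → ltNode lab ℓ (u j₁) (u j₃)) ∧
    (∀ j₁ j₂ : Fin (d + 1), u j₁ ≠ u j₂ →
      ltNode lab ℓ (u j₁) (u j₂) ∨ ltNode lab ℓ (u j₂) (u j₁)) :=
  constructible_ltNode_strict_total_order_general hR ℓ
end

section
/- Let R = ((ℓ_1,…,ℓ_d),(u_1,…,u_{d+1})) be a constructible special point data of level d with q nodes and let ℓ ∈ {1,…,q}. Let σ be the permutation of {1,…,d+1} such that u_{σ(1)}, …, u_{σ(d+1)} is in increasing lexicographic order, and let τ be the permutation such that u_{τ(1)}, …, u_{τ(d+1)} is increasing for the relation <_ℓ relative to the node labels of R. Then τ is a cyclic shift of σ: there exists h₀ ∈ {0,…,d} such that τ(i) = σ(1 + ((i + h₀ − 1) mod (d+1))) for all i = 1,…,d+1. -/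
def digitValue (b : ℕ) {d : ℕ} (f : Fin d → ℕ) : ℕ := ∑ k, f k * b ^ (k : ℕ)

section Digits

variable {b d : ℕ}

theorem digitValue_snoc (f : Fin d → ℕ) (x : ℕ) :
    digitValue b (Fin.snoc f x : Fin (d + 1) → ℕ) = digitValue b f + x * b ^ d := by
  simp [digitValue, Fin.sum_univ_castSucc]

theorem digitValue_cons (x : ℕ) (f : Fin d → ℕ) :
    digitValue b (Fin.cons x f : Fin (d + 1) → ℕ) = x + b * digitValue b f := by
  simp [digitValue, Fin.sum_univ_succ, pow_succ, Finset.mul_sum, mul_comm, mul_left_comm]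

theorem digitValue_lt {f : Fin d → ℕ} (hf : ∀ k, f k < b) : digitValue b f < b ^ d := by
  induction d with
  | zero => simp [digitValue]
  | succ n ih =>
    induction f using Fin.snocCases with | snoc f x => ?_
    have h₁ := ih fun k => by simpa using hf k.castSucc
    have h₂ : x + 1 ≤ b := by simpa using hf (Fin.last n)
    rw [digitValue_snoc, pow_succ]
    nlinarith

theorem add_mul_lt_add_mul_iff {a a' x y B : ℕ} (ha : a < B) (ha' : a' < B) :
    a + x * B < a' + y * B ↔ x < y ∨ x = y ∧ a < a' := by
  constructor
  · intro h
    rcases lt_trichotomy x y with hxy | rfl | hxy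
    · exact Or.inl hxy
    · exact Or.inr ⟨rfl, by omega⟩
    · nlinarith
  · rintro (hxy | ⟨rfl, h⟩)
    · nlinarith
    · omega

theorem add_mul_eq_add_mul_iff {a a' x y B : ℕ} (ha : a < B) (ha' : a' < B) :
    a + x * B = a' + y * B ↔ x = y ∧ a = a' := by
  refine ⟨fun h => ?_, by rintro ⟨rfl, rfl⟩; rfl⟩
  have h₁ := mt (add_mul_lt_add_mul_iff ha ha').2 h.not_lt
  have h₂ := mt (add_mul_lt_add_mul_iff ha' ha).2 h.symm.not_lt
  omega

theorem digitValue_lt_digitValue_iff {f g : Fin d → ℕ} (hf : ∀ k, f k < b) (hg : ∀ k, g k < b) :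
    digitValue b f < digitValue b g ↔ ∃ k₀, (∀ k, k₀ < k → f k = g k) ∧ f k₀ < g k₀ := by
  induction d with
  | zero => simp [digitValue]
  | succ n ih =>
    induction f using Fin.snocCases with | snoc f x => ?_
    induction g using Fin.snocCases with | snoc g y => ?_
    rw [digitValue_snoc, digitValue_snoc,
      add_mul_lt_add_mul_iff (digitValue_lt fun k => by simpa using hf k.castSucc)
        (digitValue_lt fun k => by simpa using hg k.castSucc),
      ih (fun k => by simpa using hf k.castSucc) (fun k => by simpa using hg k.castSucc),
      Fin.exists_fin_succ']
    simp only [Fin.forall_fin_succ', Fin.castSucc_lt_castSucc_iff, Fin.snoc_castSucc,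
      Fin.snoc_last, (Fin.le_last _).not_gt, false_imp_iff,
      Fin.castSucc_lt_last, forall_const, true_and]
    constructor
    · rintro (hxy | ⟨rfl, k₀, hk₀⟩)
      · exact Or.inr hxy
      · exact Or.inl ⟨k₀, ⟨hk₀.1, rfl⟩, hk₀.2⟩
    · rintro (⟨k₀, ⟨hk₀, rfl⟩, hlt⟩ | hxy)
      · exact Or.inr ⟨rfl, k₀, hk₀, hlt⟩
      · exact Or.inl hxy

theorem digitValue_inj {f g : Fin d → ℕ} (hf : ∀ k, f k < b) (hg : ∀ k, g k < b) :
    digitValue b f = digitValue b g ↔ f = g := by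
  induction d with
  | zero => simp [digitValue, funext_iff]
  | succ n ih =>
    induction f using Fin.snocCases with | snoc f x => ?_
    induction g using Fin.snocCases with | snoc g y => ?_
    rw [digitValue_snoc, digitValue_snoc,
      add_mul_eq_add_mul_iff (digitValue_lt fun k => by simpa using hf k.castSucc)
        (digitValue_lt fun k => by simpa using hg k.castSucc),
      ih (fun k => by simpa using hf k.castSucc) (fun k => by simpa using hg k.castSucc),
      Fin.snoc_inj, and_comm]

end Digits

section Keys

variable {d : ℕ}

def IsOneTwoValued (u : Fin d → ℕ) : Prop := ∀ k, u k = 1 ∨ u k = 2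

theorem IsOneTwoValued.lt_three {u : Fin d → ℕ} (hu : IsOneTwoValued u) (k : Fin d) : u k < 3 := by
  rcases hu k with h | h <;> omega

def lexKey (u : Fin d → ℕ) : ℕ := digitValue 3 (u ∘ Fin.rev)

theorem lexKey_snoc (u : Fin d → ℕ) (ε : ℕ) :
    lexKey (Fin.snoc u ε : Fin (d + 1) → ℕ) = ε + 3 * lexKey u := by
  rw [lexKey, Fin.snoc_comp_rev, digitValue_cons, lexKey]

theorem lexKey_lt {u : Fin d → ℕ} (hu : ∀ k, u k < 3) : lexKey u < 3 ^ d :=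
  digitValue_lt fun _ => hu _

theorem lexLt_iff_lexKey_lt {u v : Fin d → ℕ} (hu : ∀ k, u k < 3) (hv : ∀ k, v k < 3) :
    lexLt u v ↔ lexKey u < lexKey v := by
  rw [lexKey, lexKey, digitValue_lt_digitValue_iff (f := u ∘ Fin.rev) (g := v ∘ Fin.rev)
    (fun _ => hu _) (fun _ => hv _), lexLt, Fin.rev_surjective.exists]
  refine exists_congr fun k₀ => and_congr_left' ⟨fun h k hk => h _ (Fin.rev_lt_rev.2 hk),
    fun h k hk => by simpa using h k.rev (Fin.lt_rev_iff.1 hk)⟩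

variable (lab : Fin d → ℕ) (ℓ : ℕ)

-- `<_ℓ` first compares the `ℓ`-labelled coordinates from the last one down, with `2` below `1`
-- (the binary digits of `nodeWeight`), and breaks ties lexicographically.
def nodeDigit (u : Fin d → ℕ) (k : Fin d) : ℕ := if lab k = ℓ ∧ u k = 1 then 1 else 0

def nodeWeight (u : Fin d → ℕ) : ℕ := digitValue 2 (nodeDigit lab ℓ u)

def nodeKey (u : Fin d → ℕ) : ℕ := lexKey u + nodeWeight lab ℓ u * 3 ^ d

variable {lab ℓ} {u v : Fin d → ℕ}

theorem nodeDigit_lt_two (k : Fin d) : nodeDigit lab ℓ u k < 2 := by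
  unfold nodeDigit; split <;> omega

theorem nodeDigit_eq_nodeDigit_iff (hu : IsOneTwoValued u) (hv : IsOneTwoValued v) (k : Fin d) :
    nodeDigit lab ℓ u k = nodeDigit lab ℓ v k ↔ (lab k = ℓ → u k = v k) := by
  rcases hu k with h | h <;> rcases hv k with h' | h' <;> by_cases hl : lab k = ℓ <;>
    simp [nodeDigit, h, h', hl]

theorem nodeDigit_lt_nodeDigit_iff (hu : IsOneTwoValued u) (hv : IsOneTwoValued v) (k : Fin d) :
    nodeDigit lab ℓ u k < nodeDigit lab ℓ v k ↔ lab k = ℓ ∧ u k = 2 ∧ v k = 1 := by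
  rcases hu k with h | h <;> rcases hv k with h' | h' <;> by_cases hl : lab k = ℓ <;>
    simp [nodeDigit, h, h', hl]

theorem nodeWeight_lt_nodeWeight_iff (hu : IsOneTwoValued u) (hv : IsOneTwoValued v) :
    nodeWeight lab ℓ u < nodeWeight lab ℓ v ↔
      ∃ k₀, lab k₀ = ℓ ∧ u k₀ = 2 ∧ v k₀ = 1 ∧ ∀ k, k₀ < k → lab k = ℓ → u k = v k := by
  simp only [nodeWeight, digitValue_lt_digitValue_iff nodeDigit_lt_two nodeDigit_lt_two,
    nodeDigit_eq_nodeDigit_iff hu hv, nodeDigit_lt_nodeDigit_iff hu hv, and_comm (a := ∀ k, _),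
    and_assoc]

theorem nodeWeight_eq_nodeWeight_iff (hu : IsOneTwoValued u) (hv : IsOneTwoValued v) :
    nodeWeight lab ℓ u = nodeWeight lab ℓ v ↔ ∀ k, lab k = ℓ → u k = v k := by
  rw [nodeWeight, nodeWeight, digitValue_inj nodeDigit_lt_two nodeDigit_lt_two, funext_iff]
  exact forall_congr' (nodeDigit_eq_nodeDigit_iff hu hv)

theorem lexLt_iff_of_agree (hu : IsOneTwoValued u) (hv : IsOneTwoValued v)
    (huv : ∀ k, lab k = ℓ → u k = v k) :
    lexLt u v ↔ ∃ k₀, lab k₀ ≠ ℓ ∧ u k₀ = 1 ∧ v k₀ = 2 ∧ ∀ k, k < k₀ → u k = v k := by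
  refine exists_congr fun k₀ => ⟨fun ⟨hlt, hk₀⟩ => ?_, fun ⟨_, h, h', hlt⟩ => ⟨hlt, by omega⟩⟩
  have : u k₀ = 1 ∧ v k₀ = 2 := by rcases hu k₀ with h | h <;> rcases hv k₀ with h' | h' <;> omega
  exact ⟨fun hl => by have := huv k₀ hl; omega, this.1, this.2, hlt⟩

theorem ltNode_iff_nodeKey_lt (hu : IsOneTwoValued u) (hv : IsOneTwoValued v) :
    ltNode lab ℓ u v ↔ nodeKey lab ℓ u < nodeKey lab ℓ v := by
  rw [nodeKey, nodeKey, add_mul_lt_add_mul_iff (lexKey_lt hu.lt_three) (lexKey_lt hv.lt_three),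
    nodeWeight_lt_nodeWeight_iff hu hv, nodeWeight_eq_nodeWeight_iff hu hv,
    ← lexLt_iff_lexKey_lt hu.lt_three hv.lt_three, ltNode]
  exact or_congr Iff.rfl (and_congr_right fun huv => (lexLt_iff_of_agree hu hv huv).symm)

theorem nodeKey_lt (hu : IsOneTwoValued u) : nodeKey lab ℓ u < 2 ^ d * 3 ^ d := by
  have h₁ := lexKey_lt hu.lt_three
  have h₂ : nodeWeight lab ℓ u < 2 ^ d := digitValue_lt nodeDigit_lt_two
  rw [nodeKey]
  nlinarith

theorem nodeDigit_snoc (lab : Fin d → ℕ) (ℓ' ℓ : ℕ) (u : Fin d → ℕ) (ε : ℕ) :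
    nodeDigit (Fin.snoc lab ℓ') ℓ (Fin.snoc u ε : Fin (d + 1) → ℕ) =
      Fin.snoc (nodeDigit lab ℓ u) (if ℓ' = ℓ ∧ ε = 1 then 1 else 0) := by
  ext k
  induction k using Fin.lastCases <;> simp [nodeDigit]

theorem nodeKey_snoc (lab : Fin d → ℕ) (ℓ' ℓ : ℕ) (u : Fin d → ℕ) (ε : ℕ) :
    nodeKey (Fin.snoc lab ℓ') ℓ (Fin.snoc u ε : Fin (d + 1) → ℕ) =
      ε + 3 * nodeKey lab ℓ u + (if ℓ' = ℓ ∧ ε = 1 then 2 ^ d * 3 ^ (d + 1) else 0) := by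
  rw [nodeKey, nodeKey, nodeWeight, nodeWeight, lexKey_snoc, nodeDigit_snoc, digitValue_snoc]
  split_ifs <;> ring

end Keys

section Cyclic

variable {α : Type*} [Preorder α] {n : ℕ}

theorem Fin.strictMono_comp_add_iff {F : Fin (n + 1) → α} {t : Fin (n + 1)} :
    StrictMono (fun j => F (j + t)) ↔ ∀ i, i + 1 ≠ t → F i < F (i + 1) := by
  constructor
  · intro hF i hi
    have hlt : i - t < i - t + 1 := by
      refine Fin.lt_add_one_iff.2 (lt_of_le_of_ne (Fin.le_last _) fun h => hi ?_)
      rw [sub_eq_iff_eq_add.1 h, add_right_comm, Fin.last_add_one, zero_add]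
    simpa [add_right_comm _ 1 t] using hF hlt
  · refine fun h => Fin.strictMono_iff_lt_succ.2 fun i => ?_
    have hne : i.castSucc + t + 1 ≠ t := by
      rw [add_right_comm, Fin.coeSucc_eq_succ, Ne, add_eq_right]
      exact Fin.succ_ne_zero i
    simpa [add_right_comm _ t 1, Fin.coeSucc_eq_succ] using h _ hne

theorem Fin.strictMono_comp_add_iff_val {F : Fin (n + 1) → α} {t : Fin (n + 1)} :
    StrictMono (fun j => F (j + t)) ↔
      (∀ i (hi : i < n), i + 1 ≠ (t : ℕ) → F ⟨i, by omega⟩ < F ⟨i + 1, by omega⟩) ∧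
        (t ≠ 0 → F (Fin.last n) < F 0) := by
  rw [Fin.strictMono_comp_add_iff, Fin.forall_fin_succ', Fin.forall_iff, Fin.last_add_one]
  simp only [Fin.coeSucc_eq_succ, ne_comm (a := (0 : Fin (n + 1)))]
  refine and_congr_left' (forall₂_congr fun i hi => ?_)
  rw [Ne, Fin.ext_iff]
  rfl

theorem Fin.perm_eq_of_strictMono_comp {f : Fin n → α} {π₁ π₂ : Equiv.Perm (Fin n)}
    (h₁ : StrictMono (f ∘ π₁)) (h₂ : StrictMono (f ∘ π₂)) : π₁ = π₂ := by
  have h : f ∘ π₁ = f ∘ π₂ := by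
    rw [← h₁.range_inj h₂, Set.range_comp, Set.range_comp, π₁.range_eq_univ, π₂.range_eq_univ]
  refine Equiv.ext fun j => (π₁.eq_symm_apply).1 (h₁.injective ?_)
  simpa using congrFun h j

def IsCyclicallySorted (F : Fin (n + 1) → α) : Prop := ∃ t, StrictMono fun j => F (j + t)

theorem IsCyclicallySorted.comp_add {F : Fin (n + 1) → α} (hF : IsCyclicallySorted F)
    (s : Fin (n + 1)) : IsCyclicallySorted fun j => F (j + s) := by
  obtain ⟨t, ht⟩ := hF
  exact ⟨t - s, by simpa only [add_assoc, sub_add_cancel] using ht⟩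

theorem isCyclicallySorted_of_two {β : Type*} [LinearOrder β] {F : Fin 2 → β} (h : F 0 ≠ F 1) :
    IsCyclicallySorted F := by
  rcases h.lt_or_gt with h | h
  · refine ⟨0, Fin.strictMono_comp_add_iff_val.2 ⟨fun i hi _ => ?_, fun h0 => absurd rfl h0⟩⟩
    obtain rfl : i = 0 := by omega
    exact h
  · exact ⟨1, Fin.strictMono_comp_add_iff_val.2 ⟨fun i hi hne => absurd (by simp; omega) hne,
      fun _ => h⟩⟩

end Cyclic

section Step

variable {d : ℕ}

def stepPoints (v : Fin (d + 1) → Fin d → ℕ) (h : ℕ) (hh : h ≤ d + 1) :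
    Fin (d + 2) → Fin (d + 1) → ℕ :=
  fun j => if hj : (j : ℕ) < h then Fin.snoc (v ⟨j, by omega⟩) 1
    else Fin.snoc (v ⟨j - 1, by omega⟩) 2

def stepKey (F : Fin (d + 1) → ℕ) (h : ℕ) (hh : h ≤ d + 1) (c : ℕ) : Fin (d + 2) → ℕ :=
  fun j => if hj : (j : ℕ) < h then 3 * F ⟨j, by omega⟩ + 1 + c else 3 * F ⟨j - 1, by omega⟩ + 2

theorem comp_stepPoints {K : (Fin d → ℕ) → ℕ} {K' : (Fin (d + 1) → ℕ) → ℕ} {c : ℕ}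
    (hK₁ : ∀ x, K' (Fin.snoc x 1) = 3 * K x + 1 + c) (hK₂ : ∀ x, K' (Fin.snoc x 2) = 3 * K x + 2)
    (v : Fin (d + 1) → Fin d → ℕ) (h : ℕ) (hh : h ≤ d + 1) :
    (fun j => K' (stepPoints v h hh j)) = stepKey (fun i => K (v i)) h hh c := by
  ext j
  simp only [stepPoints, stepKey]
  split_ifs <;> simp only [hK₁, hK₂]

variable {F : Fin (d + 1) → ℕ} {h : ℕ}

theorem stepKey_last (hh : h ≤ d + 1) (c : ℕ) :
    stepKey F h hh c (Fin.last (d + 1)) = 3 * F (Fin.last d) + 2 :=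
  dif_neg (by simp; omega)

theorem stepKey_zero (hh : h ≤ d + 1) (hh₁ : 1 ≤ h) (c : ℕ) :
    stepKey F h hh c 0 = 3 * F 0 + 1 + c :=
  dif_pos (by simp; omega)

theorem IsCyclicallySorted.stepKey (hh : h ≤ d + 1) (hh₁ : 1 ≤ h) (hF : IsCyclicallySorted F) :
    IsCyclicallySorted (stepKey F h hh 0) := by
  obtain ⟨t, ht⟩ := hF
  rw [Fin.strictMono_comp_add_iff_val] at ht
  -- the rotation starts at the new position of the point where it started before
  refine ⟨⟨if (t : ℕ) < h then t else t + 1, by split <;> omega⟩,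
    Fin.strictMono_comp_add_iff_val.2 ⟨fun i hi hne => ?_, fun ht' => ?_⟩⟩
  · simp only at hne
    simp only [_root_.stepKey]
    split_ifs with h₁ h₂ h₂
    · have := ht.1 i (by omega) (by split_ifs at hne <;> omega)
      omega
    · simp only [Nat.add_sub_cancel]
      omega
    · omega
    · have := ht.1 (i - 1) (by omega) (by split_ifs at hne <;> omega)
      simp only [Nat.add_sub_cancel, Nat.sub_add_cancel (show 1 ≤ i by omega)] at this ⊢
      omega
  · have := ht.2 (by rintro rfl; exact ht' (Fin.ext (by simp; omega)))
    rw [stepKey_last, stepKey_zero hh hh₁]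
    omega

theorem StrictMono.isCyclicallySorted_stepKey (hh : h ≤ d + 1) (hh₁ : 1 ≤ h) {c : ℕ}
    (hF : StrictMono F) (hc : ∀ i, 3 * F i + 2 ≤ c) : IsCyclicallySorted (stepKey F h hh c) := by
  -- start at the point ending in `2` whose twin ends in `1`; all points ending in `1` come later
  refine ⟨⟨h, by omega⟩, Fin.strictMono_comp_add_iff_val.2 ⟨fun i hi hne => ?_, fun _ => ?_⟩⟩
  · simp only at hne
    simp only [stepKey]
    split_ifs with h₁ h₂ h₂
    · have := hF (Fin.mk_lt_mk.2 (lt_add_one i) : (⟨i, by omega⟩ : Fin (d + 1)) < ⟨i + 1, by omega⟩)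
      omega
    · exact absurd (by omega) hne
    · omega
    · have := hF (Fin.mk_lt_mk.2 (by omega) :
        (⟨i - 1, by omega⟩ : Fin (d + 1)) < ⟨i + 1 - 1, by omega⟩)
      omega
  · rw [stepKey_last, stepKey_zero hh hh₁]
    have := hc (Fin.last d)
    omega

end Step

namespace Constructible

variable {q d : ℕ} {lab : Fin d → ℕ} {u : Fin (d + 1) → Fin d → ℕ}

theorem isOneTwoValued (hR : Constructible q d lab u) (j : Fin (d + 1)) :
    IsOneTwoValued (u j) := by
  induction hR with
  | base => fin_cases j <;> intro k <;> fin_cases k <;> simp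
  | step _ _ _ _ v σ hv _ h _ _ ih =>
    have hv' : ∀ j, IsOneTwoValued (v j) := fun j => hv j ▸ ih _
    intro k
    dsimp only
    split <;> induction k using Fin.lastCases <;> simp [hv' _ _]

theorem isCyclicallySorted (hR : Constructible q d lab u) :
    IsCyclicallySorted (fun j => lexKey (u j)) ∧
      ∀ ℓ, IsCyclicallySorted fun j => nodeKey lab ℓ (u j) := by
  induction hR with
  | base ℓ' =>
    refine ⟨isCyclicallySorted_of_two (by simp [lexKey, digitValue]), fun ℓ =>
      isCyclicallySorted_of_two ?_⟩
    simp [nodeKey, nodeWeight, nodeDigit, lexKey, digitValue]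
    split_ifs <;> omega
  | @step d lab u hR ℓ' _ _ v σ hv hsort h hh₁ hh ih =>
    change IsCyclicallySorted (fun j => lexKey (stepPoints v h hh j)) ∧
      ∀ ℓ, IsCyclicallySorted fun j => nodeKey (Fin.snoc lab ℓ') ℓ (stepPoints v h hh j)
    obtain ⟨ihLex, ihNode⟩ := ih
    obtain ⟨t, ht⟩ := ihNode ℓ'
    have hσ : σ = Equiv.addRight t := by
      refine Fin.perm_eq_of_strictMono_comp (f := fun j => nodeKey lab ℓ' (u j))
        (fun i j hij => ?_) ht
      have := hsort i j hij
      rw [hv, hv] at this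
      exact (ltNode_iff_nodeKey_lt (hR.isOneTwoValued _) (hR.isOneTwoValued _)).1 this
    obtain rfl : v = fun j => u (j + t) := funext fun j => by rw [hv, hσ, Equiv.coe_addRight]
    refine ⟨?_, fun ℓ => ?_⟩
    · rw [comp_stepPoints (c := 0) (fun x => by rw [lexKey_snoc]; ring)
        (fun x => by rw [lexKey_snoc]; ring)]
      exact (ihLex.comp_add t).stepKey hh hh₁
    · by_cases hℓ : ℓ' = ℓ
      · subst hℓ
        rw [comp_stepPoints (c := 2 ^ d * 3 ^ (d + 1)) (fun x => by rw [nodeKey_snoc]; simp; ring)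
          (fun x => by rw [nodeKey_snoc]; simp; ring)]
        refine ht.isCyclicallySorted_stepKey hh hh₁ fun i => ?_
        have := nodeKey_lt (lab := lab) (ℓ := ℓ') (hR.isOneTwoValued (i + t))
        rw [pow_succ, ← mul_assoc]
        dsimp only
        omega
      · rw [comp_stepPoints (c := 0) (fun x => by rw [nodeKey_snoc]; simp [hℓ]; ring)
          (fun x => by rw [nodeKey_snoc]; simp; ring)]
        exact ((ihNode ℓ).comp_add t).stepKey hh hh₁

end Constructible

/-- If `σ` sorts the tuples of a constructible special point data increasingly for the
lexicographic order and `τ` sorts them increasingly for `<_ℓ`, then `τ` is a cyclic shift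
of `σ`. -/
theorem constructible_ordering_cyclic {q d : ℕ}
    {lab : Fin d → ℕ} {u : Fin (d + 1) → Fin d → ℕ}
    (hR : Constructible q d lab u) (ℓ : ℕ)
    (σ τ : Equiv.Perm (Fin (d + 1)))
    (hσ : ∀ i j : Fin (d + 1), i < j → lexLt (u (σ i)) (u (σ j)))
    (hτ : ∀ i j : Fin (d + 1), i < j → ltNode lab ℓ (u (τ i)) (u (τ j))) :
    ∃ h₀ : ℕ, h₀ ≤ d ∧ ∀ i : Fin (d + 1),
      τ i = σ ⟨((i : ℕ) + h₀) % (d + 1), Nat.mod_lt _ (by omega)⟩ := by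
  have hpts := hR.isOneTwoValued
  obtain ⟨⟨r, hr⟩, hnode⟩ := hR.isCyclicallySorted
  obtain ⟨t, ht⟩ := hnode ℓ
  have hσr : σ = Equiv.addRight r := Fin.perm_eq_of_strictMono_comp
    (f := fun j => lexKey (u j)) (fun i j hij =>
    (lexLt_iff_lexKey_lt (hpts _).lt_three (hpts _).lt_three).1 (hσ i j hij)) hr
  have hτt : τ = Equiv.addRight t := Fin.perm_eq_of_strictMono_comp
    (f := fun j => nodeKey lab ℓ (u j)) (fun i j hij =>
    (ltNode_iff_nodeKey_lt (hpts _) (hpts _)).1 (hτ i j hij)) ht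
  refine ⟨(t - r : Fin (d + 1)), Nat.lt_succ_iff.1 (t - r).isLt, fun i => ?_⟩
  have hmod : (⟨(i + (t - r : Fin (d + 1)) : ℕ) % (d + 1), Nat.mod_lt _ (by omega)⟩ : Fin (d + 1))
      = i + (t - r) := Fin.ext (Fin.val_add _ _).symm
  rw [hσr, hτt, hmod]
  simp only [Equiv.coe_addRight, add_assoc, sub_add_cancel]
end

section
/- Let R = ((ℓ_1,…,ℓ_d),(u_1,…,u_{d+1})) be a constructible special point data of level d with q nodes, and assume u_1, …, u_{d+1} is listed in increasing lexicographic order. Then for every node label ℓ ∈ {1,…,q} and every j = 1,…,d one has a^ℓ_{u_j}(R) ≤ a^ℓ_{u_{j+1}}(R). -/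
/-!
The monotonicity holds for every pair of tuples `x <lex y` of a constructible datum, and it is
carried through the construction together with a strict version: `a^m(x) < a^m(y)` as soon as
`x` is colex-below `y` on the `m`-labelled coordinates. Appending a coordinate labelled `ℓ` raises
`a^ℓ` by one on the upper block `v_h·2, …, v_{d+1}·2` only, so the one dangerous pair is
`x·2 <lex y·1` with `x <lex y`. Then `y` precedes `x` in the `<_ℓ`-sorted list; case (ii) of `<_ℓ`
would force `y <lex x`, so case (i) holds, i.e. `x` is colex-below `y` on the `ℓ`-coordinates,
and the strict inequality absorbs the increment.
-/

section

variable {d : ℕ}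

theorem lexLt_irrefl (x : Fin d → ℕ) : ¬ lexLt x x :=
  fun ⟨_, _, hk⟩ => lt_irrefl _ hk

theorem lexLt_asymm {x y : Fin d → ℕ} (hxy : lexLt x y) (hyx : lexLt y x) : False := by
  obtain ⟨k₀, hpre₀, hk₀⟩ := hxy
  obtain ⟨k₁, hpre₁, hk₁⟩ := hyx
  rcases lt_trichotomy k₀ k₁ with h | rfl | h
  · rw [hpre₁ k₀ h] at hk₀; omega
  · omega
  · rw [hpre₀ k₁ h] at hk₁; omega

theorem lexLt.of_snoc {x y : Fin d → ℕ} {ε δ : ℕ} (h : lexLt (Fin.snoc x ε) (Fin.snoc y δ)) :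
    lexLt x y ∨ x = y ∧ ε < δ := by
  obtain ⟨k₀, hpre, hk₀⟩ := h
  rcases Fin.eq_castSucc_or_eq_last k₀ with ⟨k, rfl⟩ | rfl
  · refine .inl ⟨k, fun k' hk' => ?_, by simpa using hk₀⟩
    simpa using hpre k'.castSucc (Fin.castSucc_lt_castSucc_iff.mpr hk')
  · refine .inr ⟨funext fun k => ?_, by simpa using hk₀⟩
    simpa using hpre k.castSucc (Fin.castSucc_lt_last k)

-- Case (i) of `u <_m u'` is `ColexLt lab m u' u`.
def ColexLt (lab : Fin d → ℕ) (m : ℕ) (x y : Fin d → ℕ) : Prop :=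
  ∃ k, lab k = m ∧ x k = 1 ∧ y k = 2 ∧ ∀ k', k < k' → lab k' = m → x k' = y k'

theorem ColexLt.of_snoc {lab : Fin d → ℕ} {ℓ m : ℕ} {x y : Fin d → ℕ} {ε δ : ℕ}
    (h : ColexLt (Fin.snoc lab ℓ) m (Fin.snoc x ε) (Fin.snoc y δ)) :
    (m = ℓ ∧ ε = 1 ∧ δ = 2) ∨ (ColexLt lab m x y ∧ (m = ℓ → ε = δ)) := by
  obtain ⟨k, hlab, hx, hy, hpost⟩ := h
  rcases Fin.eq_castSucc_or_eq_last k with ⟨k, rfl⟩ | rfl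
  · refine .inr ⟨⟨k, by simpa using hlab, by simpa using hx, by simpa using hy, ?_⟩, ?_⟩
    · intro k' hk' hlab'
      simpa using hpost k'.castSucc (Fin.castSucc_lt_castSucc_iff.mpr hk') (by simpa using hlab')
    · rintro rfl
      simpa using hpost (Fin.last d) (Fin.castSucc_lt_last k) (by simp)
  · exact .inl ⟨by simpa using hlab.symm, by simpa using hx, by simpa using hy⟩

theorem ltNode.colexLt_or_lexLt {lab : Fin d → ℕ} {ℓ : ℕ} {x y : Fin d → ℕ}
    (h : ltNode lab ℓ y x) : ColexLt lab ℓ x y ∨ lexLt y x := by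
  rcases h with ⟨k₀, hlab, hy, hx, hpost⟩ | ⟨-, k₀, -, hy, hx, hpre⟩
  · exact .inl ⟨k₀, hlab, hx, hy, fun k hk hlab' => (hpost k hk hlab').symm⟩
  · exact .inr ⟨k₀, hpre, by omega⟩

theorem aCount_snoc (lab : Fin d → ℕ) (ℓ m : ℕ) (x : Fin d → ℕ) (ε : ℕ) :
    aCount (Fin.snoc lab ℓ) m (Fin.snoc x ε) = aCount lab m x + if m = ℓ ∧ ε = 2 then 1 else 0 := by
  unfold aCount
  rw [Finset.card_filter, Finset.card_filter, Fin.sum_univ_castSucc]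
  congr 1
  · exact Finset.sum_congr rfl fun k _ => by simp
  · rcases eq_or_ne m ℓ with rfl | hne
    · simp
    · simp [hne, Ne.symm hne]

def ACountOrdered (lab : Fin d → ℕ) (m : ℕ) (x y : Fin d → ℕ) : Prop :=
  aCount lab m x ≤ aCount lab m y ∧ (ColexLt lab m x y → aCount lab m x < aCount lab m y)

theorem ACountOrdered.snoc {lab : Fin d → ℕ} {ℓ m : ℕ} {x y : Fin d → ℕ} {ε δ : ℕ}
    (hδ : δ = 1 ∨ δ = 2) (hxy : lexLt x y → ACountOrdered lab m x y)
    (hswap : ε = 2 → δ = 1 → x ≠ y → ltNode lab ℓ y x)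
    (hlt : lexLt (Fin.snoc x ε) (Fin.snoc y δ)) :
    ACountOrdered (Fin.snoc lab ℓ) m (Fin.snoc x ε) (Fin.snoc y δ) := by
  unfold ACountOrdered
  rw [aCount_snoc, aCount_snoc]
  rcases hlt.of_snoc with hxy' | ⟨rfl, hεδ⟩
  · obtain ⟨hle, hstr⟩ := hxy hxy'
    have hdown : m = ℓ → ε = 2 → δ = 1 → aCount lab m x < aCount lab m y := by
      rintro rfl rfl rfl
      rcases (hswap rfl rfl fun e => lexLt_irrefl x (e ▸ hxy')).colexLt_or_lexLt with h | h
      · exact hstr h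
      · exact (lexLt_asymm hxy' h).elim
    refine ⟨by split_ifs <;> grind, fun hC => ?_⟩
    rcases hC.of_snoc with ⟨rfl, rfl, rfl⟩ | ⟨hC, hlast⟩
    · rw [if_neg (by omega), if_pos ⟨rfl, rfl⟩]
      omega
    · have := hstr hC
      split_ifs <;> grind
  · refine ⟨by split_ifs <;> omega, fun hC => ?_⟩
    rcases hC.of_snoc with ⟨rfl, rfl, rfl⟩ | ⟨⟨k, -, hx, hy, -⟩, -⟩
    · rw [if_neg (by omega), if_pos ⟨rfl, rfl⟩]
      omega
    · omega

theorem Constructible.aCountOrdered {q : ℕ} {lab : Fin d → ℕ} {u : Fin (d + 1) → Fin d → ℕ}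
    (hR : Constructible q d lab u) :
    ∀ i j m, lexLt (u i) (u j) → ACountOrdered lab m (u i) (u j) := by
  induction hR with
  | base ℓ =>
    intro i j m hlt
    fin_cases i <;> fin_cases j
    · exact (lexLt_irrefl _ hlt).elim
    · by_cases hm : ℓ = m <;> simp [ACountOrdered, ColexLt, aCount, hm]
    · simp [lexLt] at hlt
    · exact (lexLt_irrefl _ hlt).elim
  | @step d lab u _ ℓ _ _ v σ hv hsort h _ _ IH =>
    intro i j m hlt
    have IHv : ∀ a b, lexLt (v a) (v b) → ACountOrdered lab m (v a) (v b) := by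
      intro a b
      rw [hv a, hv b]
      exact IH _ _ m
    dsimp only at hlt ⊢
    split_ifs at hlt ⊢ with hi hj hj
    · exact ACountOrdered.snoc (.inl rfl) (IHv _ _) (by simp) hlt
    · exact ACountOrdered.snoc (.inr rfl) (IHv _ _) (by simp) hlt
    · refine ACountOrdered.snoc (.inl rfl) (IHv _ _) (fun _ _ hne => hsort _ _ ?_) hlt
      exact lt_of_le_of_ne (Fin.mk_le_mk.mpr (by omega)) fun e => hne (by rw [e])
    · exact ACountOrdered.snoc (.inr rfl) (IHv _ _) (by simp) hlt

end

theorem constructible_aCount_mono_general {q d : ℕ}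
    {lab : Fin d → ℕ} {u : Fin (d + 1) → Fin d → ℕ}
    (hR : Constructible q d lab u)
    (hlex : ∀ i j : Fin (d + 1), i < j → lexLt (u i) (u j))
    (ℓ : ℕ) :
    ∀ j : Fin d, aCount lab ℓ (u j.castSucc) ≤ aCount lab ℓ (u j.succ) := by
  intro j
  exact (hR.aCountOrdered _ _ ℓ (hlex _ _ Fin.castSucc_lt_succ)).1

/-- If the tuples of a constructible special point data are listed in increasing
lexicographic order, then for every node label `ℓ ∈ {1,…,q}` the quantities
`a^ℓ_{u_j}(R)` are nondecreasing in `j`. -/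
theorem constructible_aCount_mono {q d : ℕ} (hq : 1 ≤ q) (hd : 1 ≤ d)
    {lab : Fin d → ℕ} {u : Fin (d + 1) → Fin d → ℕ}
    (hR : Constructible q d lab u)
    (hlex : ∀ i j : Fin (d + 1), i < j → lexLt (u i) (u j))
    (ℓ : ℕ) (hℓ1 : 1 ≤ ℓ) (hℓq : ℓ ≤ q) :
    ∀ j : Fin d, aCount lab ℓ (u j.castSucc) ≤ aCount lab ℓ (u j.succ) :=
  constructible_aCount_mono_general hR hlex ℓ
end
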